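/- Let k ≥ 2 and let G be a thick spider: a graph with vertices c_1,…,c_k forming a clique and s_1,…,s_k forming an independent set, where s_i is adjacent to c_j if and only if i ≠ j, possibly together with one additional vertex c_0 adjacent to all of c_1,…,c_k and to none of s_1,…,s_k. Then b*(G) = ω(G). -/

import Mathlib

variable {V : Type*} {W : Type*}

/-- A proper coloring of `G` using colors `{1, …, k}`: colors lie in `{1,…,k}`,
adjacent vertices get different colors, and every color in `{1,…,k}` is used. -/
def IsProperKColoring (G : SimpleGraph V) (k : ℕ) (c : V → ℕ) : Prop :=
  (∀ v, c v ∈ Set.Icc 1 k) ∧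
  (∀ u v, G.Adj u v → c u ≠ c v) ∧
  (∀ j ∈ Set.Icc 1 k, ∃ v, c v = j)

/-- `u` is a b-vertex: every color `j ∈ {1,…,k}` with `j ≠ c u` appears on a neighbor of `u`. -/
def IsBVertex (G : SimpleGraph V) (k : ℕ) (c : V → ℕ) (u : V) : Prop :=
  ∀ j ∈ Set.Icc 1 k, j ≠ c u → ∃ w, G.Adj u w ∧ c w = j

/-- `u` is a nice vertex: it is a b-vertex and for every color `j ≠ c u` in `{1,…,k}`
it has a b-vertex neighbor of color `j`. -/
def IsNiceVertex (G : SimpleGraph V) (k : ℕ) (c : V → ℕ) (u : V) : Prop :=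
  IsBVertex G k c u ∧
  ∀ j ∈ Set.Icc 1 k, j ≠ c u → ∃ w, G.Adj u w ∧ c w = j ∧ IsBVertex G k c w

/-- A Grundy coloring using `k` colors: proper, and every vertex of color `j` has a
neighbor of each smaller color `i ≥ 1`. -/
def IsGrundyColoring (G : SimpleGraph V) (k : ℕ) (c : V → ℕ) : Prop :=
  IsProperKColoring G k c ∧
  ∀ i j : ℕ, 1 ≤ i → i < j → j ≤ k → ∀ v, c v = j → ∃ w, G.Adj v w ∧ c w = i

/-- A z-coloring: a Grundy coloring with a nice vertex of (top) color `k`. -/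
def IsZColoring (G : SimpleGraph V) (k : ℕ) (c : V → ℕ) : Prop :=
  IsGrundyColoring G k c ∧ ∃ u, c u = k ∧ IsNiceVertex G k c u

/-- A b*-coloring: a proper coloring with a nice vertex of (top) color `k`. -/
def IsBStarColoring (G : SimpleGraph V) (k : ℕ) (c : V → ℕ) : Prop :=
  IsProperKColoring G k c ∧ ∃ u, c u = k ∧ IsNiceVertex G k c u

/-- The z-chromatic number: largest `k` admitting a z-coloring with `k` colors. -/
noncomputable def zNum (G : SimpleGraph V) : ℕ :=
  sSup {k | ∃ c : V → ℕ, IsZColoring G k c}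

/-- The b*-chromatic number: largest `k` admitting a b*-coloring with `k` colors. -/
noncomputable def bStar (G : SimpleGraph V) : ℕ :=
  sSup {k | ∃ c : V → ℕ, IsBStarColoring G k c}

/-- `m*(G)`: the largest `k` such that some vertex `u` has `k` distinct neighbors,
each of degree at least `k`. -/
noncomputable def mStar (G : SimpleGraph V) : ℕ :=
  sSup {k | ∃ (u : V) (s : Finset V), (↑s : Set V) ⊆ G.neighborSet u ∧ s.card = k ∧
    ∀ v ∈ s, k ≤ (G.neighborSet v).ncard}

/-- The clique number `ω(G)`. -/
noncomputable def omegaNum (G : SimpleGraph V) : ℕ :=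
  sSup {n | ∃ s : Finset V, G.IsNClique n s}
/-- The thick spider with clique `c_1,…,c_k` (the `Sum.inl` vertices), independent set
`s_1,…,s_k` (the `Sum.inr ∘ Sum.inl` vertices) where `s_i ~ c_j ↔ i ≠ j`, and, when
`hasHead = true`, a head `c_0` (the `Sum.inr ∘ Sum.inr` vertex) adjacent exactly to
`c_1,…,c_k`. -/
def thickSpider (k : ℕ) (hasHead : Bool) :
    SimpleGraph (Fin k ⊕ (Fin k ⊕ Fin (cond hasHead 1 0))) :=
  SimpleGraph.fromRel fun x y =>
    match x, y with
    | Sum.inl _, Sum.inl _ => True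
    | Sum.inl i, Sum.inr (Sum.inl j) => i ≠ j
    | Sum.inl _, Sum.inr (Sum.inr _) => True
    | _, _ => False

/-!
Colour the clique vertex `c_i` and the leg `s_i` alike with colour `i`, and the head with colour
`k + 1`. This proper colouring uses exactly `ω(G)` colours, so it bounds every clique and, being
injective on a maximum clique, makes every clique vertex a b-vertex; hence `b*(G) ≥ ω(G)`.
Conversely, a b-vertex outside the clique `c_1, …, c_k` has at most `k - 1` (leg) or `k` (head)
neighbours, so it sees at most `ω(G)` colours. A nice vertex `c_a` of a colouring with more than
`ω(G)` colours would therefore need its b-vertex neighbours among the `k - 1` other `c_b`,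
which cannot carry all the remaining colours.
-/

open Finset

lemma le_card_add_one_of_forall_exists {α : Type*} {N : Finset α} {g : α → ℕ} {t m : ℕ}
    (h : ∀ j ∈ Set.Icc 1 t, j ≠ m → ∃ a ∈ N, g a = j) : t ≤ #N + 1 := by
  have hsub : (Icc 1 t).erase m ⊆ N.image g := fun j hj => by
    obtain ⟨hjm, hj⟩ := mem_erase.mp hj
    obtain ⟨a, ha, rfl⟩ := h j (by simpa using hj) hjm
    exact mem_image_of_mem g ha
  have := (pred_card_le_card_erase (s := Icc 1 t) (a := m)).trans
    ((card_le_card hsub).trans card_image_le)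
  simp only [Nat.card_Icc] at this
  omega

section Clique

variable {G : SimpleGraph V} {n m : ℕ} {c : V → ℕ} {s : Finset V}

lemma SimpleGraph.IsClique.injOn_of_adj_ne (hs : G.IsClique (s : Set V))
    (hadj : ∀ u v, G.Adj u v → c u ≠ c v) : Set.InjOn c s := fun x hx y hy hxy => by
  by_contra hne
  exact hadj x y (hs hx hy hne) hxy

lemma SimpleGraph.IsNClique.le_of_properColoring (hs : G.IsNClique m s) (hc : ∀ v, c v ∈ Set.Icc 1 n)
    (hadj : ∀ u v, G.Adj u v → c u ≠ c v) : m ≤ n := by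
  have := card_le_card_of_injOn (t := Icc 1 n) c (fun v _ => by simpa using hc v)
    (hs.isClique.injOn_of_adj_ne hadj)
  simpa [hs.card_eq] using this

lemma SimpleGraph.IsNClique.image_eq_Icc (hs : G.IsNClique n s) (hc : ∀ v, c v ∈ Set.Icc 1 n)
    (hadj : ∀ u v, G.Adj u v → c u ≠ c v) : s.image c = Icc 1 n := by
  refine eq_of_subset_of_card_le (fun j hj => ?_) ?_
  · obtain ⟨v, -, rfl⟩ := mem_image.mp hj
    simpa using hc v
  · rw [card_image_of_injOn (hs.isClique.injOn_of_adj_ne hadj), hs.card_eq, Nat.card_Icc]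
    omega

lemma isBStarColoring_of_isNClique (hn : 0 < n) (hs : G.IsNClique n s)
    (hc : ∀ v, c v ∈ Set.Icc 1 n) (hadj : ∀ u v, G.Adj u v → c u ≠ c v) :
    IsBStarColoring G n c := by
  have hcolor : ∀ j ∈ Set.Icc 1 n, ∃ w ∈ s, c w = j := fun j hj => by
    have : j ∈ s.image c := by simpa [hs.image_eq_Icc hc hadj] using hj
    simpa using this
  have hadj_of_ne : ∀ v ∈ s, ∀ w ∈ s, c w ≠ c v → G.Adj v w := fun v hv w hw hne =>
    hs.isClique hv hw fun h => hne (h ▸ rfl)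
  have hb : ∀ v ∈ s, IsBVertex G n c v := fun v hv j hj hne => by
    obtain ⟨w, hw, rfl⟩ := hcolor j hj
    exact ⟨w, hadj_of_ne v hv w hw hne, rfl⟩
  obtain ⟨u, hu, hun⟩ := hcolor n ⟨hn, le_rfl⟩
  refine ⟨⟨hc, hadj, fun j hj => ?_⟩, u, hun, hb u hu, fun j hj hne => ?_⟩
  · obtain ⟨w, -, hw⟩ := hcolor j hj
    exact ⟨w, hw⟩
  · obtain ⟨w, hw, rfl⟩ := hcolor j hj
    exact ⟨w, hadj_of_ne u hu w hw hne, rfl, hb w hw⟩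

lemma omegaNum_eq_of_isNClique (hs : G.IsNClique n s) (hc : ∀ v, c v ∈ Set.Icc 1 n)
    (hadj : ∀ u v, G.Adj u v → c u ≠ c v) : omegaNum G = n :=
  IsGreatest.csSup_eq ⟨⟨s, hs⟩, fun _ ⟨_, ht⟩ => ht.le_of_properColoring hc hadj⟩

lemma bStar_eq_of_isNClique (hs : G.IsNClique n s) (hc : ∀ v, c v ∈ Set.Icc 1 n)
    (hadj : ∀ u v, G.Adj u v → c u ≠ c v)
    (hle : ∀ t c', IsBStarColoring G t c' → t ≤ n) : bStar G = n := by
  have hub : n ∈ upperBounds {t | ∃ c', IsBStarColoring G t c'} := fun t ⟨c', hc'⟩ => hle t c' hc'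
  rcases Nat.eq_zero_or_pos n with rfl | hn
  · exact Nat.le_zero.mp (csSup_le' hub)
  · exact IsGreatest.csSup_eq ⟨⟨c, isBStarColoring_of_isNClique hn hs hc hadj⟩, hub⟩

end Clique

section ThickSpider

variable {k : ℕ} {hh : Bool}

@[simp]
lemma thickSpider_adj_inl_inl {i j : Fin k} :
    (thickSpider k hh).Adj (.inl i) (.inl j) ↔ i ≠ j := by
  simp [thickSpider]

@[simp]
lemma thickSpider_adj_inl_inr_inl {i j : Fin k} :
    (thickSpider k hh).Adj (.inl i) (.inr (.inl j)) ↔ i ≠ j := by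
  simp [thickSpider]

@[simp]
lemma thickSpider_adj_inl_inr_inr {i : Fin k} {z : Fin (cond hh 1 0)} :
    (thickSpider k hh).Adj (.inl i) (.inr (.inr z)) := by
  simp [thickSpider]

@[simp]
lemma thickSpider_not_adj_inr_inr {x y : Fin k ⊕ Fin (cond hh 1 0)} :
    ¬ (thickSpider k hh).Adj (.inr x) (.inr y) := by
  simp [thickSpider]

lemma thickSpider_le_of_isBVertex_inr {t : ℕ} {c : Fin k ⊕ (Fin k ⊕ Fin (cond hh 1 0)) → ℕ}
    {x : Fin k ⊕ Fin (cond hh 1 0)} (hb : IsBVertex (thickSpider k hh) t c (.inr x)) :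
    t ≤ k + cond hh 1 0 := by
  rcases x with i | z
  · have hcard := le_card_add_one_of_forall_exists (N := univ.erase i) (g := c ∘ Sum.inl)
      fun j hj hne => by
        obtain ⟨b | y, hadj, rfl⟩ := hb j hj hne
        · exact ⟨b, by simpa [SimpleGraph.adj_comm] using hadj, rfl⟩
        · exact absurd hadj thickSpider_not_adj_inr_inr
    simp only [card_erase_of_mem (mem_univ i), card_univ, Fintype.card_fin] at hcard
    have := i.pos
    omega
  · have hcard := le_card_add_one_of_forall_exists (N := univ) (g := c ∘ Sum.inl)
      fun j hj hne => by
        obtain ⟨b | y, hadj, rfl⟩ := hb j hj hne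
        · exact ⟨b, mem_univ b, rfl⟩
        · exact absurd hadj thickSpider_not_adj_inr_inr
    simp only [card_univ, Fintype.card_fin] at hcard
    have := z.pos
    omega

lemma thickSpider_le_of_isBStarColoring {t : ℕ} {c : Fin k ⊕ (Fin k ⊕ Fin (cond hh 1 0)) → ℕ}
    (h : IsBStarColoring (thickSpider k hh) t c) : t ≤ k + cond hh 1 0 := by
  obtain ⟨-, u, hu, hub, hnice⟩ := h
  rcases u with a | x
  · by_contra! ht
    have hcard := le_card_add_one_of_forall_exists (N := univ.erase a) (g := c ∘ Sum.inl) (m := t)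
      fun j hj hne => by
        obtain ⟨b | y, hadj, rfl, hb⟩ := hnice j hj (hu ▸ hne)
        · exact ⟨b, by simpa [eq_comm] using hadj, rfl⟩
        · exact absurd (thickSpider_le_of_isBVertex_inr hb) ht.not_ge
    simp only [card_erase_of_mem (mem_univ a), card_univ, Fintype.card_fin] at hcard
    have := a.pos
    omega
  · exact thickSpider_le_of_isBVertex_inr hub

def thickSpiderColoring (k : ℕ) (hh : Bool) : Fin k ⊕ (Fin k ⊕ Fin (cond hh 1 0)) → ℕ :=
  Sum.elim (fun i => i + 1) (Sum.elim (fun i => i + 1) fun _ => k + 1)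

lemma thickSpiderColoring_mem_Icc (v : Fin k ⊕ (Fin k ⊕ Fin (cond hh 1 0))) :
    thickSpiderColoring k hh v ∈ Set.Icc 1 (k + cond hh 1 0) := by
  rcases v with i | i | z <;> simp only [thickSpiderColoring, Sum.elim_inl, Sum.elim_inr,
    Set.mem_Icc]
  · omega
  · omega
  · have := z.pos
    omega

lemma thickSpiderColoring_ne_of_adj {u v : Fin k ⊕ (Fin k ⊕ Fin (cond hh 1 0))}
    (h : (thickSpider k hh).Adj u v) : thickSpiderColoring k hh u ≠ thickSpiderColoring k hh v := by
  rcases u with i | i | z <;> rcases v with j | j | w <;>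
    simp_all [SimpleGraph.adj_comm, thickSpiderColoring, Fin.val_eq_val] <;> omega

def thickSpiderClique (k : ℕ) (hh : Bool) : Finset (Fin k ⊕ (Fin k ⊕ Fin (cond hh 1 0))) :=
  univ.disjSum (univ.map .inr)

lemma isNClique_thickSpiderClique :
    (thickSpider k hh).IsNClique (k + cond hh 1 0) (thickSpiderClique k hh) := by
  refine ⟨fun u hu v hv huv => ?_, by simp [thickSpiderClique]⟩
  rcases u with i | i | z <;> rcases v with j | j | w <;>
    simp_all [SimpleGraph.adj_comm, thickSpiderClique]
  cases hh <;> revert z w <;> decide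

end ThickSpider

theorem thickSpider_bStar_eq_omega_general (k : ℕ) (hasHead : Bool) :
    bStar (thickSpider k hasHead) = omegaNum (thickSpider k hasHead) := by
  have hs := isNClique_thickSpiderClique (k := k) (hh := hasHead)
  rw [bStar_eq_of_isNClique hs thickSpiderColoring_mem_Icc (fun _ _ => thickSpiderColoring_ne_of_adj)
      fun _ _ => thickSpider_le_of_isBStarColoring,
    omegaNum_eq_of_isNClique hs thickSpiderColoring_mem_Icc fun _ _ => thickSpiderColoring_ne_of_adj]

/-- for `k ≥ 2`, the b*-chromatic number of a thick spider (with or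
without head) equals its clique number. -/
theorem thickSpider_bStar_eq_omega (k : ℕ) (hk : 2 ≤ k) (hasHead : Bool) :
    bStar (thickSpider k hasHead) = omegaNum (thickSpider k hasHead) :=
  thickSpider_bStar_eq_omega_general k hasHead
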